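/- arXiv:2309.16512 — 3 statements merged into one kernel-verified Lean document; each statement's English description precedes it below -/
import Mathlib

section
/- (Extreme points of the ℓ1-sphere section of an arrangement cone, Lemma 2.) Let X ∈ ℝ^{n×d}, let D ∈ ℝ^{n×n} be a diagonal matrix with diagonal entries in {0, 1}, and let C := {w ∈ ℝ^d : (2D − I)Xw ≥ 0 entrywise, ‖w‖₁ = 1}. Then w is an extreme point of C (that is, w ∈ C and w does not lie strictly between two distinct points of C) if and only if w ∈ C and there exists a subset S of d−1 linearly independent rows of the stacked matrix [X; I_d] ∈ ℝ^{(n+d)×d} such that every row indexed by S is orthogonal to w; equivalently, w spans the one-dimensional null space of those d−1 rows and satisfies ‖w‖₁ = 1. -/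
/-!
On each orthant the ℓ¹-norm is linear, so near `w` the set `C` is cut out by linear conditions.
If `v` is orthogonal to every row of `[X; I]` that is orthogonal to `w`, then for small `ε` both
`w ± ε v` stay in the cone, with ℓ¹-norms `1 ± ε t`, and `w` lies in the open segment between
their normalisations; so at an extreme point every such `v` is a multiple of `w`. Conversely, if
`w` lies in an open segment `(w₁, w₂)` in `C`, the constraints tight at `w` are tight at `w₁` and
`w₂` (cone inequalities by nonnegativity, zero coordinates by equality in the triangle inequality
for the ℓ¹-norm), so `w₁, w₂ ∈ ℝ w`, and normalisation forces `w₁ = w₂ = w`. By rank–nullity,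
the rows tight at `w` cut out exactly the line `ℝ w` if and only if they have rank `d - 1`.
-/

open Matrix Module Submodule Set Filter Topology

section LinearAlgebra

variable {K ι : Type*} [Field K]

theorem LinearIndepOn.finrank_span_image_eq_card {V : Type*} [AddCommGroup V] [Module K V]
    {f : ι → V} {t : Finset ι} (ht : LinearIndepOn K f t) :
    finrank K (span K (f '' t)) = t.card := by
  rw [image_eq_range, finrank_span_eq_card ht]
  simp

theorem exists_finset_linearIndepOn_card_eq_iff [Finite ι] {V : Type*} [AddCommGroup V]
    [Module K V] [FiniteDimensional K V] (f : ι → V) (s : Set ι) (k : ℕ) :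
    (∃ t : Finset ι, ↑t ⊆ s ∧ t.card = k ∧ LinearIndepOn K f t) ↔
      k ≤ finrank K (span K (f '' s)) := by
  constructor
  · rintro ⟨t, hts, rfl, ht⟩
    rw [← ht.finrank_span_image_eq_card]
    exact Submodule.finrank_mono (span_mono (image_mono hts))
  · intro hk
    obtain ⟨b, hbs, -, hsb, hb⟩ :=
      exists_linearIndepOn_extension (linearIndepOn_empty K f) (empty_subset s)
    have hspan : span K (f '' b) = span K (f '' s) :=
      le_antisymm (span_mono (image_mono hbs)) (span_le.2 hsb)
    lift b to Finset ι using toFinite b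
    obtain ⟨t, htb, rfl⟩ : ∃ t ⊆ b, t.card = k := by
      apply Finset.exists_subset_card_eq
      rwa [← hb.finrank_span_image_eq_card, hspan]
    exact ⟨t, (Finset.coe_subset.2 htb).trans hbs, rfl, hb.mono (Finset.coe_subset.2 htb)⟩

variable {n : Type*} [Fintype n]

def dotAnnihilator (f : ι → n → K) (s : Set ι) : Submodule K (n → K) :=
  LinearMap.ker (mulVecLin (of fun i : s => f i))

theorem mem_dotAnnihilator {f : ι → n → K} {s : Set ι} {v : n → K} :
    v ∈ dotAnnihilator f s ↔ ∀ i ∈ s, f i ⬝ᵥ v = 0 := by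
  simp [dotAnnihilator, funext_iff, mulVec]

theorem finrank_dotAnnihilator_add_finrank_span [Finite ι] (f : ι → n → K) (s : Set ι) :
    finrank K (dotAnnihilator f s) + finrank K (span K (f '' s)) = Fintype.card n := by
  have h := LinearMap.finrank_range_add_finrank_ker (mulVecLin (of fun i : s => f i))
  rw [finrank_fintype_fun_eq_card, ← rank, rank_eq_finrank_span_row] at h
  rw [image_eq_range, ← h, add_comm]
  rfl

theorem le_span_singleton_iff_finrank_le_one {V : Type*} [AddCommGroup V] [Module K V]
    {P : Submodule K V} [FiniteDimensional K P] {w : V} (hw0 : w ≠ 0) (hw : w ∈ P) :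
    P ≤ K ∙ w ↔ finrank K P ≤ 1 := by
  constructor
  · intro h
    simpa [finrank_span_singleton hw0] using Submodule.finrank_mono h
  · intro h
    refine (eq_of_le_of_finrank_le (span_singleton_le_iff_mem _ _ |>.2 hw) ?_).ge
    rwa [finrank_span_singleton hw0]

theorem exists_finset_linearIndepOn_card_eq_sub_one_iff [Finite ι] (f : ι → n → K) (s : Set ι)
    {w : n → K} (hw0 : w ≠ 0) (hw : w ∈ dotAnnihilator f s) :
    (∃ t : Finset ι, ↑t ⊆ s ∧ t.card = Fintype.card n - 1 ∧ LinearIndepOn K f t) ↔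
      dotAnnihilator f s ≤ K ∙ w := by
  rw [exists_finset_linearIndepOn_card_eq_iff, le_span_singleton_iff_finrank_le_one hw0 hw]
  have := finrank_dotAnnihilator_add_finrank_span f s
  omega

end LinearAlgebra

theorem mem_extremePoints_iff_forall_eq_smul_add_one_sub_smul {E : Type*} [AddCommGroup E]
    [Module ℝ E] {A : Set E} {x : E} :
    x ∈ A.extremePoints ℝ ↔ x ∈ A ∧ ∀ x₁ ∈ A, ∀ x₂ ∈ A, ∀ θ : ℝ, 0 < θ → θ < 1 →
      x = θ • x₁ + (1 - θ) • x₂ → x₁ = x ∧ x₂ = x := by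
  refine mem_extremePoints.trans (and_congr_right fun _ => ?_)
  refine forall₄_congr fun x₁ _ x₂ _ => ⟨fun h θ hθ hθ1 hx => h ⟨θ, 1 - θ, hθ, by linarith,
    by ring, hx.symm⟩, ?_⟩
  rintro h ⟨a, b, ha, hb, hab, rfl⟩
  obtain rfl : b = 1 - a := by linarith
  exact h a ha (by linarith) rfl

theorem mem_openSegment_inv_smul_add_inv_smul_sub {E : Type*} [AddCommGroup E] [Module ℝ E]
    {s : ℝ} (hs : |s| < 1) (w v : E) :
    w ∈ openSegment ℝ ((1 + s)⁻¹ • (w + v)) ((1 - s)⁻¹ • (w - v)) := by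
  obtain ⟨h₁, h₂⟩ := abs_lt.1 hs
  refine ⟨(1 + s) / 2, (1 - s) / 2, by linarith, by linarith, by ring, ?_⟩
  have e₁ : (1 + s) / 2 * (1 + s)⁻¹ = 1 / 2 := by field_simp [show 1 + s ≠ 0 by linarith]
  have e₂ : (1 - s) / 2 * (1 - s)⁻¹ = 1 / 2 := by field_simp [show 1 - s ≠ 0 by linarith]
  rw [smul_smul, smul_smul, e₁, e₂]
  module

theorem eventually_pos_add_mul {a : ℝ} (ha : 0 < a) (b : ℝ) :
    ∀ᶠ η in 𝓝 (0 : ℝ), 0 < a + η * b := by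
  have : Tendsto (fun η : ℝ => a + η * b) (𝓝 0) (𝓝 a) := by
    simpa using ((tendsto_id (x := 𝓝 (0 : ℝ))).mul_const b).const_add a
  exact this.eventually_const_lt ha

theorem eventually_nonneg_add_mul {a b : ℝ} (ha : 0 ≤ a) (hb : a = 0 → b = 0) :
    ∀ᶠ η in 𝓝 (0 : ℝ), 0 ≤ a + η * b := by
  rcases ha.eq_or_lt with rfl | ha
  · simp [hb rfl]
  · exact (eventually_pos_add_mul ha b).mono fun _ => le_of_lt

theorem eventually_abs_add_mul {a b : ℝ} (hb : a = 0 → b = 0) :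
    ∀ᶠ η in 𝓝 (0 : ℝ), |a + η * b| = |a| + η * (SignType.sign a * b) := by
  rcases lt_trichotomy a 0 with ha | rfl | ha
  · filter_upwards [eventually_pos_add_mul (neg_pos.2 ha) (-b)] with η hη
    rw [abs_of_neg (by linarith), abs_of_neg ha, sign_neg ha]
    simp only [SignType.coe_neg, SignType.coe_one]
    ring
  · simp [hb rfl]
  · filter_upwards [eventually_pos_add_mul ha b] with η hη
    rw [abs_of_pos hη, abs_of_pos ha, sign_pos ha]
    simp

theorem Filter.Eventually.exists_pos_and_neg {P : ℝ → Prop} (h : ∀ᶠ η in 𝓝 (0 : ℝ), P η) :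
    ∃ ε > 0, P ε ∧ P (-ε) := by
  obtain ⟨δ, hδ, hP⟩ := Metric.eventually_nhds_iff.1 h
  refine ⟨δ / 2, half_pos hδ, hP ?_, hP ?_⟩ <;>
    simp [abs_of_pos hδ] <;> linarith

theorem Matrix.IsDiag.mul_mulVec_apply {R m n : Type*} [Semiring R] [Fintype m] [DecidableEq m]
    [Fintype n] {D : Matrix m m R} (hD : D.IsDiag) (X : Matrix m n R) (v : n → R) (i : m) :
    ((D * X) *ᵥ v) i = D i i * (X *ᵥ v) i := by
  calc ((D * X) *ᵥ v) i = (diagonal D.diag *ᵥ (X *ᵥ v)) i := by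
        rw [hD.diagonal_diag, mulVec_mulVec]
    _ = D i i * (X *ᵥ v) i := mulVec_diagonal _ _ _

theorem Matrix.IsDiag.mul_mulVec_apply_eq_zero_iff {R m n : Type*} [Semiring R]
    [NoZeroDivisors R] [Fintype m] [DecidableEq m] [Fintype n] {D : Matrix m m R} (hD : D.IsDiag)
    {i : m} (hi : D i i ≠ 0) (X : Matrix m n R) (v : n → R) :
    ((D * X) *ᵥ v) i = 0 ↔ X i ⬝ᵥ v = 0 := by
  rw [hD.mul_mulVec_apply, mul_eq_zero, or_iff_right hi]
  rfl

section ConeL1Section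

variable {m n : Type*} [Fintype n]

def coneL1Section (A : Matrix m n ℝ) : Set (n → ℝ) :=
  {w | (∀ i, 0 ≤ (A *ᵥ w) i) ∧ ∑ k, |w k| = 1}

variable {A : Matrix m n ℝ} {w v : n → ℝ}

theorem ne_zero_of_mem_coneL1Section (hw : w ∈ coneL1Section A) : w ≠ 0 := by
  rintro rfl
  simp [coneL1Section] at hw

theorem sum_abs_smul (c : ℝ) (w : n → ℝ) : ∑ k, |(c • w) k| = |c| * ∑ k, |w k| := by
  simp [abs_mul, Finset.mul_sum]

theorem inv_smul_mem_coneL1Section {u : n → ℝ} (hu : ∀ i, 0 ≤ (A *ᵥ u) i)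
    (hpos : 0 < ∑ k, |u k|) : (∑ k, |u k|)⁻¹ • u ∈ coneL1Section A := by
  refine ⟨fun i => ?_, ?_⟩
  · rw [mulVec_smul]
    exact smul_nonneg (inv_nonneg.2 hpos.le) (hu i)
  · rw [sum_abs_smul, abs_of_pos (inv_pos.2 hpos), inv_mul_cancel₀ hpos.ne']

theorem eventually_inv_smul_mem_coneL1Section [Finite m] (hw : w ∈ coneL1Section A)
    (hA : ∀ i, (A *ᵥ w) i = 0 → (A *ᵥ v) i = 0) (hv : ∀ k, w k = 0 → v k = 0) :
    ∃ t : ℝ, ∀ᶠ η in 𝓝 (0 : ℝ),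
      |η * t| < 1 ∧ (1 + η * t)⁻¹ • (w + η • v) ∈ coneL1Section A := by
  set t := ∑ k, (SignType.sign (w k) : ℝ) * v k
  refine ⟨t, ?_⟩
  have hcone : ∀ᶠ η in 𝓝 (0 : ℝ), ∀ i, 0 ≤ (A *ᵥ (w + η • v)) i := by
    refine eventually_all.2 fun i => ?_
    simpa [mulVec_add, mulVec_smul] using eventually_nonneg_add_mul (hw.1 i) (hA i)
  have hnorm : ∀ᶠ η in 𝓝 (0 : ℝ), ∑ k, |(w + η • v) k| = 1 + η * t := by
    filter_upwards [eventually_all.2 fun k => eventually_abs_add_mul (hv k)] with η hη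
    simp only [Pi.add_apply, Pi.smul_apply, smul_eq_mul, hη, Finset.sum_add_distrib,
      ← Finset.mul_sum, hw.2, t]
  have hsmall : ∀ᶠ η in 𝓝 (0 : ℝ), |η * t| < 1 := by
    have : Tendsto (fun η : ℝ => |η * t|) (𝓝 0) (𝓝 0) := by
      simpa using ((tendsto_id (x := 𝓝 (0 : ℝ))).mul_const t).abs
    exact this.eventually_lt_const one_pos
  filter_upwards [hcone, hnorm, hsmall] with η hη hηn hηs
  refine ⟨hηs, ?_⟩
  rw [← hηn]
  exact inv_smul_mem_coneL1Section hη (by linarith [neg_abs_le (η * t)])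

theorem mem_span_singleton_of_mem_extremePoints_coneL1Section [Finite m]
    (hext : w ∈ (coneL1Section A).extremePoints ℝ)
    (hA : ∀ i, (A *ᵥ w) i = 0 → (A *ᵥ v) i = 0) (hv : ∀ k, w k = 0 → v k = 0) :
    v ∈ ℝ ∙ w := by
  obtain ⟨t, ht⟩ := eventually_inv_smul_mem_coneL1Section hext.1 hA hv
  obtain ⟨ε, hε, ⟨hs, hplus⟩, -, hminus⟩ := ht.exists_pos_and_neg
  rw [neg_mul, ← sub_eq_add_neg, neg_smul, ← sub_eq_add_neg] at hminus
  have h := hext.2 hplus hminus (mem_openSegment_inv_smul_add_inv_smul_sub hs w (ε • v))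
  rw [inv_smul_eq_iff₀ (by linarith [neg_abs_le (ε * t)]), add_smul, one_smul, add_right_inj,
    mul_smul] at h
  exact mem_span_singleton.2 ⟨t, (smul_right_injective _ hε.ne' h).symm⟩

theorem mulVec_apply_eq_zero_of_mem_openSegment {x₁ x₂ : n → ℝ} (hx₁ : ∀ i, 0 ≤ (A *ᵥ x₁) i)
    (hx₂ : ∀ i, 0 ≤ (A *ᵥ x₂) i) (h : w ∈ openSegment ℝ x₁ x₂) {i : m}
    (hi : (A *ᵥ w) i = 0) : (A *ᵥ x₁) i = 0 := by
  obtain ⟨a, b, ha, hb, -, rfl⟩ := h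
  simp only [mulVec_add, mulVec_smul, Pi.add_apply, Pi.smul_apply, smul_eq_mul] at hi
  have h₀ := (add_eq_zero_iff_of_nonneg (mul_nonneg ha.le (hx₁ i)) (mul_nonneg hb.le (hx₂ i))).1 hi
  exact (mul_eq_zero.1 h₀.1).resolve_left ha.ne'

theorem eq_zero_of_mem_openSegment_of_sum_abs_eq_one {x₁ x₂ : n → ℝ} (hx₁ : ∑ k, |x₁ k| = 1)
    (hx₂ : ∑ k, |x₂ k| = 1) (hw : ∑ k, |w k| = 1) (h : w ∈ openSegment ℝ x₁ x₂) {k : n}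
    (hk : w k = 0) : x₁ k = 0 := by
  obtain ⟨a, b, ha, hb, hab, rfl⟩ := h
  have hle : ∀ j, |(a • x₁ + b • x₂) j| ≤ a * |x₁ j| + b * |x₂ j| := fun j => by
    simpa [abs_mul, abs_of_pos ha, abs_of_pos hb] using abs_add_le (a * x₁ j) (b * x₂ j)
  have hsum : ∑ j, |(a • x₁ + b • x₂) j| = ∑ j, (a * |x₁ j| + b * |x₂ j|) := by
    rw [Finset.sum_add_distrib, ← Finset.mul_sum, ← Finset.mul_sum, hx₁, hx₂, hw]
    linarith
  have hk' := (Finset.sum_eq_sum_iff_of_le fun j _ => hle j).1 hsum k (Finset.mem_univ k)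
  rw [hk, abs_zero] at hk'
  have := (add_eq_zero_iff_of_nonneg (by positivity) (by positivity)).1 hk'.symm
  exact abs_eq_zero.1 ((mul_eq_zero.1 this.1).resolve_left ha.ne')

theorem mem_extremePoints_coneL1Section_iff [Finite m] (hw : w ∈ coneL1Section A) :
    w ∈ (coneL1Section A).extremePoints ℝ ↔
      ∀ v, (∀ i, (A *ᵥ w) i = 0 → (A *ᵥ v) i = 0) → (∀ k, w k = 0 → v k = 0) → v ∈ ℝ ∙ w := by
  refine ⟨fun hext v => mem_span_singleton_of_mem_extremePoints_coneL1Section hext,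
    fun H => ⟨hw, fun x₁ hx₁ x₂ hx₂ hseg => ?_⟩⟩
  have hmul : ∀ {x y}, x ∈ coneL1Section A → y ∈ coneL1Section A →
      w ∈ openSegment ℝ x y → ∃ c : ℝ, c • w = x ∧ |c| = 1 := by
    intro x y hx hy h
    obtain ⟨c, rfl⟩ := mem_span_singleton.1 <| H x
      (fun i => mulVec_apply_eq_zero_of_mem_openSegment hx.1 hy.1 h)
      (fun k => eq_zero_of_mem_openSegment_of_sum_abs_eq_one hx.2 hy.2 hw.2 h)
    have hc := hx.2
    rw [sum_abs_smul, hw.2, mul_one] at hc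
    exact ⟨c, rfl, hc⟩
  obtain ⟨c₁, rfl, hc₁⟩ := hmul hx₁ hx₂ hseg
  obtain ⟨c₂, rfl, hc₂⟩ := hmul hx₂ hx₁ (openSegment_symm ℝ (c₁ • w) x₂ ▸ hseg)
  obtain ⟨a, b, ha, hb, hab, h⟩ := hseg
  have hcomb : a * c₁ + b * c₂ = 1 := by
    rw [smul_smul, smul_smul, ← add_smul] at h
    exact smul_left_injective ℝ (ne_zero_of_mem_coneL1Section hw) (h.trans (one_smul ℝ w).symm)
  obtain rfl : c₁ = 1 := by nlinarith [le_abs_self c₁, le_abs_self c₂]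
  exact one_smul ℝ w

theorem mem_extremePoints_coneL1Section_iff_exists_linearIndepOn [Finite m] {ι : Type*}
    [Finite ι] (f : ι → n → ℝ) (hw : w ∈ coneL1Section A)
    (hf : ∀ v, (∀ s, f s ⬝ᵥ w = 0 → f s ⬝ᵥ v = 0) ↔
      (∀ i, (A *ᵥ w) i = 0 → (A *ᵥ v) i = 0) ∧ ∀ k, w k = 0 → v k = 0) :
    w ∈ (coneL1Section A).extremePoints ℝ ↔ ∃ S : Finset ι,
      S.card = Fintype.card n - 1 ∧ LinearIndepOn ℝ f S ∧ ∀ s ∈ S, f s ⬝ᵥ w = 0 := by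
  have hann : ∀ v, v ∈ dotAnnihilator f {s | f s ⬝ᵥ w = 0} ↔
      (∀ i, (A *ᵥ w) i = 0 → (A *ᵥ v) i = 0) ∧ ∀ k, w k = 0 → v k = 0 := by
    simpa [mem_dotAnnihilator] using hf
  rw [mem_extremePoints_coneL1Section_iff hw]
  calc (∀ v, _ → _ → v ∈ ℝ ∙ w) ↔ dotAnnihilator f {s | f s ⬝ᵥ w = 0} ≤ ℝ ∙ w := by
        simp only [SetLike.le_def, hann, and_imp]
    _ ↔ _ := (exists_finset_linearIndepOn_card_eq_sub_one_iff f _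
          (ne_zero_of_mem_coneL1Section hw) ((hann w).2 ⟨fun _ h => h, fun _ h => h⟩)).symm
    _ ↔ _ := exists_congr fun S =>
        ⟨fun ⟨hS, hc, hl⟩ => ⟨hc, hl, hS⟩, fun ⟨hc, hl, hS⟩ => ⟨hS, hc, hl⟩⟩

end ConeL1Section

/-- Extreme points of the ℓ1-sphere section of an arrangement cone,
Lemma 2. -/
theorem stmt12 {n d : ℕ} (X : Matrix (Fin n) (Fin d) ℝ) (D : Matrix (Fin n) (Fin n) ℝ)
    (hdiag : ∀ i j, i ≠ j → D i j = 0) (h01 : ∀ i, D i i = 0 ∨ D i i = 1)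
    (C : Set (Fin d → ℝ))
    (hC : C = {w : Fin d → ℝ |
      (∀ i, 0 ≤ (((2 : ℝ) • D - 1) * X).mulVec w i) ∧ (∑ k, |w k|) = 1})
    (row : Fin n ⊕ Fin d → (Fin d → ℝ))
    (hrow1 : ∀ i, row (Sum.inl i) = X i)
    (hrow2 : ∀ k, row (Sum.inr k) = Pi.single k 1)
    (w : Fin d → ℝ) :
    (w ∈ C ∧ ∀ w₁ ∈ C, ∀ w₂ ∈ C, ∀ θ : ℝ, 0 < θ → θ < 1 →
        w = θ • w₁ + (1 - θ) • w₂ → w₁ = w ∧ w₂ = w) ↔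
    (w ∈ C ∧ ∃ S : Finset (Fin n ⊕ Fin d), S.card = d - 1 ∧
        LinearIndependent ℝ (fun s : {a // a ∈ S} => row s.1) ∧
        ∀ s ∈ S, (∑ k, row s k * w k) = 0) := by
  obtain rfl : C = coneL1Section (((2 : ℝ) • D - 1) * X) := hC
  have hsign : ((2 : ℝ) • D - 1).IsDiag :=
    (IsDiag.smul 2 fun i j h => hdiag i j h).sub isDiag_one
  have hsign0 : ∀ i, ((2 : ℝ) • D - 1) i i ≠ 0 := fun i => by
    rcases h01 i with h | h <;> norm_num [h]
  have key (hw : w ∈ coneL1Section (((2 : ℝ) • D - 1) * X)) :=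
    mem_extremePoints_coneL1Section_iff_exists_linearIndepOn row hw fun v => by
      simp [Sum.forall, hrow1, hrow2, single_dotProduct,
        hsign.mul_mulVec_apply_eq_zero_iff (hsign0 _)]
  rw [Fintype.card_fin] at key
  rw [← mem_extremePoints_iff_forall_eq_smul_add_one_sub_smul]
  exact ⟨fun h => ⟨h.1, (key h.1).1 h⟩, fun ⟨hw, hS⟩ => (key hw).2 hS⟩
end

section
/- (Archimedean approximation of spherical cone sections by polytopes, Lemma 4.) Let p₁, …, p_k ∈ ℝ^d be vectors with ‖p_i‖₂ = 1 for all i, and let K := {Σ_{i=1}^k λ_i p_i : λ_i ≥ 0} be their conic hull. Assume K is pointed, i.e., K ∩ (−K) = {0}. Let P := conv{p₁, …, p_k}, P₀ := conv({0} ∪ {p₁, …, p_k}), d_min := min{‖w‖₂ : w ∈ P} (pointedness guarantees d_min > 0), and C₂ := K ∩ {w ∈ ℝ^d : ‖w‖₂ ≤ 1}. Then P₀ ⊆ C₂ ⊆ d_min^{−1} · P₀, where d_min^{−1} · P₀ is the dilation of P₀ by the factor 1/d_min. -/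
/-!
Every nonzero `w = ∑ λᵢ pᵢ` of the cone is `s • q` with `s = ∑ λᵢ > 0` and `q ∈ P`. If `‖w‖ ≤ 1`,
then `s ≤ 1 / ‖q‖ ≤ 1 / d_min`, so `d_min • w = (d_min s) • q` lies on the segment `[0, q] ⊆ P₀`.
That `d_min > 0` comes from compactness of `P` and `0 ∉ P`; the latter is pointedness: from
`0 = ∑ μᵢ pᵢ` with `μⱼ > 0`, both `μⱼ pⱼ` and `-(μⱼ pⱼ) = ∑_{i ≠ j} μᵢ pᵢ` lie in the cone.
-/

open Set

variable {E ι : Type*} [Fintype ι]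

section Cone

variable [AddCommGroup E] [Module ℝ E] (p : ι → E)

def conicHull : Set E := {w | ∃ lam : ι → ℝ, (∀ i, 0 ≤ lam i) ∧ w = ∑ i, lam i • p i}

variable {p}

lemma sum_smul_mem_conicHull {s : Finset ι} {μ : ι → ℝ} (hμ : ∀ i ∈ s, 0 ≤ μ i) :
    ∑ i ∈ s, μ i • p i ∈ conicHull p := by
  classical
  refine ⟨fun i => if i ∈ s then μ i else 0, fun i => ?_, ?_⟩
  · dsimp only
    split_ifs with hi
    exacts [hμ i hi, le_rfl]
  · simp only [ite_smul, zero_smul, Finset.sum_ite_mem, Finset.univ_inter]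

variable (p)

lemma mem_conicHull (i : ι) : p i ∈ conicHull p := by
  simpa using sum_smul_mem_conicHull (p := p) (s := {i}) (μ := 1) (by simp)

lemma zero_mem_conicHull : (0 : E) ∈ conicHull p := by
  simpa using sum_smul_mem_conicHull (p := p) (s := ∅) (μ := 0) (by simp)

lemma convex_conicHull : Convex ℝ (conicHull p) := by
  rintro _ ⟨a, ha, rfl⟩ _ ⟨b, hb, rfl⟩ s t hs ht -
  refine ⟨fun i => s * a i + t * b i,
    fun i => add_nonneg (mul_nonneg hs (ha i)) (mul_nonneg ht (hb i)), ?_⟩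
  simp only [add_smul, mul_smul, Finset.smul_sum, Finset.sum_add_distrib]

lemma convexHull_range_eq_image_stdSimplex :
    convexHull ℝ (range p) = (fun μ => ∑ i, μ i • p i) '' stdSimplex ℝ ι := by
  classical
  have h := (Fintype.linearCombination ℝ p).image_convexHull
    (range fun i j => if i = j then (1 : ℝ) else 0)
  rw [convexHull_basis_eq_stdSimplex, ← range_comp] at h
  simp only [Function.comp_def, Fintype.linearCombination_apply, ite_smul, one_smul, zero_smul,
    Finset.sum_ite_eq, Finset.mem_univ, if_true] at h
  exact h.symm

lemma eq_zero_or_exists_pos_smul_of_mem_conicHull {w : E} (hw : w ∈ conicHull p) :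
    w = 0 ∨ ∃ s : ℝ, 0 < s ∧ ∃ q ∈ convexHull ℝ (range p), w = s • q := by
  obtain ⟨lam, hlam, rfl⟩ := hw
  set s := ∑ i, lam i
  have hs0 : 0 ≤ s := Finset.sum_nonneg fun i _ => hlam i
  rcases hs0.eq_or_lt with hs | hs
  · have hlam_zero := (Finset.sum_eq_zero_iff_of_nonneg fun i _ => hlam i).mp hs.symm
    exact .inl (Finset.sum_eq_zero fun i hi => by rw [hlam_zero i hi, zero_smul])
  · refine .inr ⟨s, hs, ∑ i, (lam i / s) • p i, mem_convexHull_of_exists_fintype _ p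
      (fun i => div_nonneg (hlam i) hs.le) (by rw [← Finset.sum_div, div_self hs.ne'])
      mem_range_self rfl, ?_⟩
    simp only [Finset.smul_sum, smul_smul, mul_div_cancel₀ _ hs.ne']

lemma zero_notMem_convexHull_range (hp : ∀ i, p i ≠ 0)
    (hsalient : ∀ w ∈ conicHull p, -w ∈ conicHull p → w = 0) :
    (0 : E) ∉ convexHull ℝ (range p) := by
  classical
  rw [convexHull_range_eq_image_stdSimplex]
  rintro ⟨μ, ⟨hμ0, hμ1⟩, hsum⟩
  obtain ⟨j, -, hj⟩ := Finset.exists_ne_zero_of_sum_ne_zero (hμ1.symm ▸ one_ne_zero)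
  have hrest : -(μ j • p j) = ∑ i ∈ Finset.univ.erase j, μ i • p i :=
    neg_eq_of_add_eq_zero_right ((Finset.add_sum_erase _ _ (Finset.mem_univ j)).trans hsum)
  have hj_mem : μ j • p j ∈ conicHull p := by
    simpa using sum_smul_mem_conicHull (p := p) (s := {j}) (fun i _ => hμ0 i)
  have := hsalient _ hj_mem (hrest ▸ sum_smul_mem_conicHull (fun i _ => hμ0 i))
  exact (smul_eq_zero.mp this).elim hj (hp j)

end Cone

section Norm

variable [NormedAddCommGroup E]

lemma convexHull_insert_zero_subset_conicHull_inter_closedBall [NormedSpace ℝ E] (p : ι → E)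
    (hp : ∀ i, ‖p i‖ ≤ 1) :
    convexHull ℝ (insert 0 (range p)) ⊆ conicHull p ∩ Metric.closedBall 0 1 := by
  refine convexHull_min (insert_subset_iff.mpr ⟨⟨zero_mem_conicHull p, by simp⟩, ?_⟩)
    ((convex_conicHull p).inter (convex_closedBall 0 1))
  exact range_subset_iff.mpr fun i => ⟨mem_conicHull p i, mem_closedBall_zero_iff.mpr (hp i)⟩

lemma sInf_norm_image_le_norm {P : Set E} {q : E} (hq : q ∈ P) : sInf ((‖·‖) '' P) ≤ ‖q‖ :=
  csInf_le ⟨0, by rintro _ ⟨x, -, rfl⟩; exact norm_nonneg x⟩ ⟨q, hq, rfl⟩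

lemma IsCompact.sInf_norm_image_pos {P : Set E} (hP : IsCompact P) (hne : P.Nonempty)
    (h0 : (0 : E) ∉ P) : 0 < sInf ((‖·‖) '' P) := by
  obtain ⟨x, hx, hx_eq⟩ := (hP.image continuous_norm).sInf_mem (hne.image _)
  rw [← hx_eq]
  exact norm_pos_iff.mpr (ne_of_mem_of_not_mem hx h0)

end Norm

open scoped Pointwise

/-- Archimedean approximation of spherical cone sections by
polytopes, Lemma 4. -/
theorem stmt14 {d k : ℕ} (p : Fin k → EuclideanSpace ℝ (Fin d))
    (hp : ∀ i, ‖p i‖ = 1)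
    (K : Set (EuclideanSpace ℝ (Fin d)))
    (hK : K = {w | ∃ lam : Fin k → ℝ, (∀ i, 0 ≤ lam i) ∧ w = ∑ i, lam i • p i})
    (hpointed : ∀ w ∈ K, -w ∈ K → w = 0)
    (P P₀ : Set (EuclideanSpace ℝ (Fin d)))
    (hP : P = convexHull ℝ (Set.range p))
    (hP₀ : P₀ = convexHull ℝ (insert 0 (Set.range p)))
    (dmin : ℝ) (hdmin : dmin = sInf ((fun w => ‖w‖) '' P))
    (C₂ : Set (EuclideanSpace ℝ (Fin d)))
    (hC₂ : C₂ = K ∩ Metric.closedBall 0 1) :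
    P₀ ⊆ C₂ ∧ C₂ ⊆ dmin⁻¹ • P₀ := by
  subst hK hP hP₀ hdmin hC₂
  refine ⟨convexHull_insert_zero_subset_conicHull_inter_closedBall p fun i => (hp i).le, ?_⟩
  rintro w ⟨hwK, hw⟩
  -- `w = 0` also covers `k = 0`, where `P = ∅` and `dmin = sInf ∅ = 0`.
  rcases eq_zero_or_exists_pos_smul_of_mem_conicHull p hwK with rfl | ⟨s, hs, q, hq, rfl⟩
  · exact ⟨0, subset_convexHull ℝ _ (mem_insert 0 _), smul_zero _⟩
  have hp_ne : ∀ i, p i ≠ 0 := fun i => norm_ne_zero_iff.mp ((hp i).symm ▸ one_ne_zero)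
  have hdmin_pos := (finite_range p).isCompact_convexHull ℝ |>.sInf_norm_image_pos ⟨q, hq⟩
    (zero_notMem_convexHull_range p hp_ne hpointed)
  rw [mem_inv_smul_set_iff₀ hdmin_pos.ne', smul_smul]
  refine (convex_convexHull ℝ _).smul_mem_of_zero_mem (subset_convexHull ℝ _ (mem_insert 0 _))
    (convexHull_mono (subset_insert _ _) hq) ⟨by positivity, ?_⟩
  calc _ * s ≤ ‖q‖ * s := by gcongr; exact sInf_norm_image_le_norm hq
    _ = ‖s • q‖ := by rw [norm_smul, Real.norm_of_nonneg hs.le, mul_comm]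
    _ ≤ 1 := mem_closedBall_zero_iff.mp hw
end

section
/- (ℓ1 isometry implies small chamber diameter, Lemma 3.) Let X ∈ ℝ^{n×d}, α > 0 and ε ≥ 0. Suppose that (1 − ε)‖w‖₂ ≤ (1/(αn))‖Xw‖₁ ≤ (1 + ε)‖w‖₂ for all w ∈ ℝ^d. Then the maximum chamber diameter satisfies 𝒟(X) ≤ 4√ε; that is, any two unit vectors w, v ∈ ℝ^d with sign(Xw) = sign(Xv) entrywise satisfy ‖w − v‖₂ ≤ 4√ε. -/
/-!
Sign agreement of `Xw` and `Xv` makes the ℓ1 norm additive on them, so the lower isometry bound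
for `w` and `v` and the upper one for `w + v` give `(1 + ε) ‖w + v‖ ≥ 2 (1 - ε)`: the sum of the
two unit vectors is almost as long as possible, and the parallelogram law turns this into a bound
on `‖w - v‖`.
-/

/-- ℓ1 norm of a vector. -/
noncomputable def l1n {k : ℕ} (v : Fin k → ℝ) : ℝ := ∑ i, |v i|

/-- Euclidean (ℓ2) norm of a vector. -/
noncomputable def l2n {k : ℕ} (v : Fin k → ℝ) : ℝ := Real.sqrt (∑ i, (v i) ^ 2)

theorem Real.abs_add_of_sign_eq {a b : ℝ} (h : Real.sign a = Real.sign b) :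
    |a + b| = |a| + |b| := by
  refine (abs_add_eq_add_abs_iff a b).2 ?_
  rcases lt_trichotomy a 0 with ha | rfl | ha <;> rcases lt_trichotomy b 0 with hb | rfl | hb <;>
    simp_all [Real.sign_of_neg, Real.sign_of_pos, le_of_lt] <;> norm_num at h

theorem l1n_add_of_sign_eq {k : ℕ} {a b : Fin k → ℝ}
    (h : ∀ i, Real.sign (a i) = Real.sign (b i)) : l1n (a + b) = l1n a + l1n b := by
  simp only [l1n, Pi.add_apply, Real.abs_add_of_sign_eq (h _), Finset.sum_add_distrib]

theorem l2n_eq_norm_toLp {k : ℕ} (v : Fin k → ℝ) : l2n v = ‖WithLp.toLp 2 v‖ := by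
  simp [l2n, EuclideanSpace.norm_eq]

theorem norm_sub_le_four_mul_sqrt_of_norm_add_ge {E : Type*} [NormedAddCommGroup E]
    [InnerProductSpace ℝ E] {x y : E} {ε : ℝ} (hx : ‖x‖ = 1) (hy : ‖y‖ = 1)
    (h : 2 * (1 - ε) ≤ (1 + ε) * ‖x + y‖) : ‖x - y‖ ≤ 4 * √ε := by
  have hpar := parallelogram_law_with_norm ℝ x y
  rw [hx, hy] at hpar
  have hle : ‖x + y‖ ≤ 2 := by linarith [norm_add_le x y]
  have hε : 0 ≤ ε := by nlinarith [norm_nonneg (x + y)]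
  have hdefect : 2 - ‖x + y‖ ≤ 4 * ε := by nlinarith
  -- `‖x - y‖² = (2 - ‖x + y‖) (2 + ‖x + y‖)`
  have hsq : ‖x - y‖ ^ 2 ≤ 16 * ε := by nlinarith [norm_nonneg (x + y)]
  have h16 : 4 * √ε = √(16 * ε) := by
    rw [Real.sqrt_mul' _ hε, show (16 : ℝ) = 4 ^ 2 by norm_num, Real.sqrt_sq (by norm_num)]
  rw [h16]
  exact (Real.le_sqrt (norm_nonneg _) (by positivity)).2 hsq

theorem stmt16_general {n d : ℕ} (X : Matrix (Fin n) (Fin d) ℝ) (α ε : ℝ)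
    (hiso : ∀ w : Fin d → ℝ,
      (1 - ε) * l2n w ≤ (1 / (α * n)) * l1n (fun i => ∑ k, X i k * w k) ∧
      (1 / (α * n)) * l1n (fun i => ∑ k, X i k * w k) ≤ (1 + ε) * l2n w) :
    ∀ w v : Fin d → ℝ, l2n w = 1 → l2n v = 1 →
      (∀ i, Real.sign (∑ k, X i k * w k) = Real.sign (∑ k, X i k * v k)) →
      l2n (w - v) ≤ 4 * Real.sqrt ε := by
  intro w v hw hv hsign
  have hadd : l1n (X.mulVec (w + v)) = l1n (X.mulVec w) + l1n (X.mulVec v) := by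
    rw [Matrix.mulVec_add]
    exact l1n_add_of_sign_eq hsign
  have hsum : 2 * (1 - ε) ≤ (1 + ε) * l2n (w + v) := by
    have hw' : (1 - ε) * 1 ≤ 1 / (α * n) * l1n (X.mulVec w) := hw ▸ (hiso w).1
    have hv' : (1 - ε) * 1 ≤ 1 / (α * n) * l1n (X.mulVec v) := hv ▸ (hiso v).1
    have hwv : 1 / (α * n) * l1n (X.mulVec (w + v)) ≤ (1 + ε) * l2n (w + v) := (hiso (w + v)).2
    rw [hadd, mul_add] at hwv
    linarith
  rw [l2n_eq_norm_toLp] at hw hv hsum ⊢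
  rw [WithLp.toLp_add] at hsum
  rw [WithLp.toLp_sub]
  exact norm_sub_le_four_mul_sqrt_of_norm_add_ge hw hv hsum

/-- ℓ1 isometry implies small chamber diameter, Lemma 3. -/
theorem stmt16 {n d : ℕ} (X : Matrix (Fin n) (Fin d) ℝ) (α ε : ℝ)
    (hα : 0 < α) (hε : 0 ≤ ε)
    (hiso : ∀ w : Fin d → ℝ,
      (1 - ε) * l2n w ≤ (1 / (α * n)) * l1n (fun i => ∑ k, X i k * w k) ∧
      (1 / (α * n)) * l1n (fun i => ∑ k, X i k * w k) ≤ (1 + ε) * l2n w) :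
    ∀ w v : Fin d → ℝ, l2n w = 1 → l2n v = 1 →
      (∀ i, Real.sign (∑ k, X i k * w k) = Real.sign (∑ k, X i k * v k)) →
      l2n (w - v) ≤ 4 * Real.sqrt ε :=
  stmt16_general X α ε hiso
end
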